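/- arXiv:2109.02624 — 2 statements merged into one kernel-verified Lean document; each statement's English description precedes it below -/
import Mathlib

section
/- The form parallel transport Transp(ε) = ε − Im⟨p'/‖p'‖, ε⟩ · i·(y/‖y‖ + p'/‖p'‖)/(1 + ⟨y/‖y‖, p'/‖p'‖⟩), for nonzero y, p' in a complex Hilbert space with ⟨y, p'⟩ real and positive, preserves the real inner product: Re⟨Transp(ε), Transp(ε')⟩ = Re⟨ε, ε'⟩ for all ε, ε' in the form tangent space at y, i.e., satisfying Im⟨y, ε⟩ = Im⟨y, ε'⟩ = 0. -/
/-- Form parallel transport preserves the real inner product on the form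
tangent space. -/
theorem form_transport_isometry
    {Y : Type*} [NormedAddCommGroup Y] [InnerProductSpace ℂ Y] [CompleteSpace Y]
    (y p' : Y) (hy : y ≠ 0) (hp' : p' ≠ 0)
    (hre : 0 < (inner ℂ y p' : ℂ).re) (him : (inner ℂ y p' : ℂ).im = 0) :
    ∀ ε ε' : Y, (inner ℂ y ε : ℂ).im = 0 → (inner ℂ y ε' : ℂ).im = 0 →
      (inner ℂ
        (ε - ((inner ℂ (‖p'‖⁻¹ • p') ε : ℂ).im /
            (1 + (inner ℂ (‖y‖⁻¹ • y) (‖p'‖⁻¹ • p') : ℂ).re)) •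
          (Complex.I • (‖y‖⁻¹ • y + ‖p'‖⁻¹ • p')))
        (ε' - ((inner ℂ (‖p'‖⁻¹ • p') ε' : ℂ).im /
            (1 + (inner ℂ (‖y‖⁻¹ • y) (‖p'‖⁻¹ • p') : ℂ).re)) •
          (Complex.I • (‖y‖⁻¹ • y + ‖p'‖⁻¹ • p'))) : ℂ).re
      = (inner ℂ ε ε' : ℂ).re := by
  intro ε ε' hε hε'
  have hy0 : (0:ℝ) < ‖y‖ := norm_pos_iff.mpr hy
  have hp0 : (0:ℝ) < ‖p'‖ := norm_pos_iff.mpr hp'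
  set u : Y := ‖y‖⁻¹ • y with hu
  set v : Y := ‖p'‖⁻¹ • p' with hv
  have hnu : ‖u‖ = 1 := by
    rw [hu, norm_smul]; simp [abs_of_pos (inv_pos.mpr hy0), inv_mul_cancel₀ hy0.ne']
  have hnv : ‖v‖ = 1 := by
    rw [hv, norm_smul]; simp [abs_of_pos (inv_pos.mpr hp0), inv_mul_cancel₀ hp0.ne']
  have huu : (inner ℂ u u : ℂ) = 1 := by
    rw [inner_self_eq_norm_sq_to_K, hnu]; norm_num
  have hvv : (inner ℂ v v : ℂ) = 1 := by
    rw [inner_self_eq_norm_sq_to_K, hnv]; norm_num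
  have huv : (inner ℂ u v : ℂ) = (((‖y‖⁻¹ * ‖p'‖⁻¹) * (inner ℂ y p' : ℂ).re : ℝ) : ℂ) := by
    rw [hu, hv, RCLike.real_smul_eq_coe_smul (K := ℂ), RCLike.real_smul_eq_coe_smul (K := ℂ),
      inner_smul_left, inner_smul_right]
    apply Complex.ext <;> simp [him] <;> ring
  have huv_im : (inner ℂ u v : ℂ).im = 0 := by rw [huv]; simp
  have huv_re : 0 < (inner ℂ u v : ℂ).re := by
    rw [huv]; simp only [Complex.ofReal_re]; positivity
  have hc : (1 : ℝ) + (inner ℂ u v : ℂ).re ≠ 0 := by positivity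
  have huε : (inner ℂ u ε : ℂ).im = 0 := by
    rw [hu, RCLike.real_smul_eq_coe_smul (K := ℂ), inner_smul_left]; simp [hε]
  have huε' : (inner ℂ u ε' : ℂ).im = 0 := by
    rw [hu, RCLike.real_smul_eq_coe_smul (K := ℂ), inner_smul_left]; simp [hε']
  set a : ℝ := (inner ℂ v ε : ℂ).im with ha
  set a' : ℝ := (inner ℂ v ε' : ℂ).im with ha'
  set c : ℝ := 1 + (inner ℂ u v : ℂ).re with hcdef
  set w : Y := Complex.I • (u + v) with hw
  have eεu : (inner ℂ ε u : ℂ).im = 0 := by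
    rw [← inner_conj_symm ε u, Complex.conj_im, huε, neg_zero]
  have eεv : (inner ℂ ε v : ℂ).im = -a := by
    rw [← inner_conj_symm ε v, Complex.conj_im, ha]
  have evu : (inner ℂ v u : ℂ).re = (inner ℂ u v : ℂ).re := by
    rw [← inner_conj_symm v u, Complex.conj_re]
  have hWε : (inner ℂ w ε : ℂ) = -Complex.I * ((inner ℂ u ε : ℂ) + (inner ℂ v ε : ℂ)) := by
    rw [hw, inner_smul_left, inner_add_left]; simp [Complex.conj_I]
  have hWε' : (inner ℂ w ε' : ℂ) = -Complex.I * ((inner ℂ u ε' : ℂ) + (inner ℂ v ε' : ℂ)) := by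
    rw [hw, inner_smul_left, inner_add_left]; simp [Complex.conj_I]
  have h1 : (inner ℂ ε w : ℂ).re = a := by
    rw [← inner_conj_symm ε w, hWε]
    simp [Complex.mul_re, huε, ha, eεu, eεv]
  have h2 : (inner ℂ w ε' : ℂ).re = a' := by
    rw [hWε']
    simp [Complex.mul_re, huε', ha']
  have h3 : (inner ℂ w w : ℂ).re = 2 * c := by
    rw [hw, inner_smul_left, inner_smul_right, inner_add_left, inner_add_right, inner_add_right,
      huu, hvv, ← inner_conj_symm v u]
    simp only [Complex.conj_I, hcdef]
    simp [Complex.mul_re, Complex.mul_im, Complex.add_re, Complex.add_im, huv_im, evu]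
    ring
  simp only [inner_sub_left, inner_sub_right, RCLike.real_smul_eq_coe_smul (K := ℂ),
    inner_smul_left, inner_smul_right, Complex.sub_re, Complex.mul_re, Complex.conj_re,
    Complex.conj_im, Complex.ofReal_re, Complex.ofReal_im, h1, h2, h3]
  simp [h1, h2, h3]
  field_simp
  ring
end

section
/- The form parallel transport Transp(ε) = ε − Im⟨q', ε⟩ · i·(q + q')/(1 + ⟨q, q'⟩), where q = y/‖y‖ and q' = p'/‖p'‖ are unit vectors with ⟨q, q'⟩ real and positive, maps the form tangent space at y, {ε : Im⟨y, ε⟩ = 0}, into the form tangent space at p', {ε : Im⟨p', ε⟩ = 0}. -/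
set_option maxHeartbeats 1000000 in
/-- Form parallel transport maps the form tangent space at y into the form
tangent space at p'. -/
theorem form_transport_maps_tangent
    {Y : Type*} [NormedAddCommGroup Y] [InnerProductSpace ℂ Y] [CompleteSpace Y]
    (y p' : Y) (hy : y ≠ 0) (hp' : p' ≠ 0)
    (hre : 0 < (inner ℂ y p' : ℂ).re) (him : (inner ℂ y p' : ℂ).im = 0) :
    ∀ ε : Y, (inner ℂ y ε : ℂ).im = 0 →
      (inner ℂ p'
        (ε - ((inner ℂ (‖p'‖⁻¹ • p') ε : ℂ).im /
            (1 + (inner ℂ (‖y‖⁻¹ • y) (‖p'‖⁻¹ • p') : ℂ).re)) •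
          (Complex.I • (‖y‖⁻¹ • y + ‖p'‖⁻¹ • p'))) : ℂ).im = 0 := by
  intro ε hε
  have hyn : ‖y‖ ≠ 0 := norm_ne_zero_iff.mpr hy
  have hpn : ‖p'‖ ≠ 0 := norm_ne_zero_iff.mpr hp'
  have hap : (inner ℂ p' y : ℂ) = (starRingEnd ℂ) (inner ℂ y p') := (inner_conj_symm p' y).symm
  have hpy_re : (inner ℂ p' y : ℂ).re = (inner ℂ y p' : ℂ).re := by
    rw [hap, Complex.conj_re]
  have hpy_im : (inner ℂ p' y : ℂ).im = 0 := by
    rw [hap, Complex.conj_im, him, neg_zero]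
  have hpp : (inner ℂ p' p' : ℂ) = (‖p'‖ : ℂ)^2 := by
    rw [inner_self_eq_norm_sq_to_K]; norm_cast
  have hden : 1 + ((‖y‖⁻¹ * ‖p'‖⁻¹) * (inner ℂ y p' : ℂ).re) ≠ 0 := by
    have h1 : 0 < (‖y‖⁻¹ * ‖p'‖⁻¹) * (inner ℂ y p' : ℂ).re := by positivity
    linarith
  simp only [← Complex.coe_smul, inner_sub_right, inner_smul_left, inner_smul_right,
    inner_add_right, inner_add_left, hpp, hap, map_mul, Complex.conj_conj,
    Complex.conj_ofReal, Complex.ofReal_inv, map_inv₀]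
  simp only [Complex.sub_im, Complex.add_re, Complex.add_im, Complex.mul_re, Complex.mul_im,
    Complex.I_re, Complex.I_im, Complex.ofReal_re, Complex.ofReal_im,
    Complex.div_im, Complex.div_re, Complex.ofReal_pow, Complex.one_re, Complex.one_im,
    Complex.normSq_apply, hpy_re, hpy_im, him, hε, Complex.inv_re, Complex.inv_im]
  field_simp
  simp only [← Complex.ofReal_pow, Complex.ofReal_re, hpy_re, Complex.conj_re]
  have hD : ‖p'‖ * ‖y‖ * (inner ℂ y p').re + ‖p'‖ ^ 2 * ‖y‖ ^ 2 ≠ 0 := by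
    have h1 := mul_pos (mul_pos (norm_pos_iff.mpr hp') (norm_pos_iff.mpr hy)) hre
    have h2 := mul_pos (pow_pos (norm_pos_iff.mpr hp') 2) (pow_pos (norm_pos_iff.mpr hy) 2)
    linarith
  linear_combination (-(inner ℂ p' ε).im * ‖p'‖ ^ 2 * ‖y‖ ^ 2) * mul_inv_cancel₀ hD
end
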